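/- For every integer t ≥ 1, the sum of squared weights satisfies ∑_{i=1}^t (α_t^i)² ≤ 2H/t. -/

import Mathlib

/-- The learning rate `α_t = (H+1)/(H+t)`. -/
noncomputable def lrate (H t : ℕ) : ℝ := (H + 1) / (H + t)

/-- The weight `α_t^i = α_i · ∏_{j=i+1}^t (1 − α_j)`. -/
noncomputable def lrateW (H t i : ℕ) : ℝ :=
  lrate H i * ∏ j ∈ Finset.Icc (i + 1) t, (1 - lrate H j)

/-!
The weights `α_t^i` (`1 ≤ i ≤ t`) are nonnegative and sum to one, so `∑ (α_t^i)² ≤ max_i α_t^i`.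
Since `α_{t+1}^i = (1 - α_{t+1}) α_t^i` and `(1 - α_{t+1}) α_t ≤ α_{t+1}`, induction on `t`
gives `α_t^i ≤ α_t = (H+1)/(H+t)`, which is at most `2H/t` once `H ≥ 1`.
-/

open Finset

theorem Finset.sum_sq_le_mul_sum {ι R : Type*} [CommSemiring R] [PartialOrder R]
    [IsOrderedRing R] (s : Finset ι) {f : ι → R} {M : R} (hf : ∀ i ∈ s, 0 ≤ f i)
    (hM : ∀ i ∈ s, f i ≤ M) : ∑ i ∈ s, f i ^ 2 ≤ M * ∑ i ∈ s, f i := by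
  rw [mul_sum]
  refine sum_le_sum fun i hi => ?_
  rw [sq]
  exact mul_le_mul_of_nonneg_right (hM i hi) (hf i hi)

lemma lrate_nonneg (H t : ℕ) : 0 ≤ lrate H t := by
  unfold lrate; positivity

lemma one_sub_lrate_succ (H t : ℕ) : 1 - lrate H (t + 1) = t / (H + t + 1) := by
  unfold lrate
  field_simp
  push_cast
  ring

lemma one_sub_lrate_nonneg {H j : ℕ} (hj : 1 ≤ j) : 0 ≤ 1 - lrate H j := by
  obtain ⟨t, rfl⟩ := Nat.exists_eq_add_of_le' hj
  rw [one_sub_lrate_succ]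
  positivity

lemma one_sub_lrate_succ_mul_lrate_le (H t : ℕ) :
    (1 - lrate H (t + 1)) * lrate H t ≤ lrate H (t + 1) := by
  rw [one_sub_lrate_succ]
  unfold lrate
  rcases Nat.eq_zero_or_pos (H + t) with h | h
  · obtain ⟨rfl, rfl⟩ : H = 0 ∧ t = 0 := by omega
    norm_num
  · have h' : (0 : ℝ) < H + t := by exact_mod_cast h
    rw [div_mul_div_comm, div_le_div_iff₀ (by positivity) (by positivity)]
    push_cast
    nlinarith [mul_nonneg (mul_nonneg (Nat.cast_nonneg (α := ℝ) H) (h'.le))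
      (show (0 : ℝ) ≤ H + 1 by positivity)]

lemma lrateW_nonneg (H t i : ℕ) : 0 ≤ lrateW H t i :=
  mul_nonneg (lrate_nonneg H i)
    (prod_nonneg fun j hj => one_sub_lrate_nonneg (by simp at hj; omega))

lemma lrateW_self (H i : ℕ) : lrateW H i i = lrate H i := by
  simp [lrateW]

lemma lrateW_succ (H : ℕ) {t i : ℕ} (hi : i ≤ t) :
    lrateW H (t + 1) i = lrateW H t i * (1 - lrate H (t + 1)) := by
  rw [lrateW, lrateW, prod_Icc_succ_top (by omega), mul_assoc]

lemma lrateW_le_lrate (H : ℕ) {t i : ℕ} (hi : i ≤ t) : lrateW H t i ≤ lrate H t := by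
  induction t, hi using Nat.le_induction with
  | base => exact (lrateW_self H i).le
  | succ t hi ih =>
    rw [lrateW_succ H hi, mul_comm]
    calc (1 - lrate H (t + 1)) * lrateW H t i
        ≤ (1 - lrate H (t + 1)) * lrate H t :=
          mul_le_mul_of_nonneg_left ih (one_sub_lrate_nonneg (by omega))
      _ ≤ lrate H (t + 1) := one_sub_lrate_succ_mul_lrate_le H t

lemma sum_lrateW (H : ℕ) {t : ℕ} (ht : 1 ≤ t) : ∑ i ∈ Icc 1 t, lrateW H t i = 1 := by
  induction t, ht using Nat.le_induction with
  | base => simp [lrateW_self, lrate, Nat.cast_add_one_ne_zero]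
  | succ t ht ih =>
    rw [sum_Icc_succ_top (by omega), lrateW_self,
      sum_congr rfl fun i hi => lrateW_succ H (mem_Icc.mp hi).2, ← sum_mul, ih]
    ring

lemma lrate_le_two_mul_div (H t : ℕ) (hH : 1 ≤ H) (ht : 1 ≤ t) :
    lrate H t ≤ 2 * H / t := by
  have hH' : (1 : ℝ) ≤ H := by exact_mod_cast hH
  have ht' : (1 : ℝ) ≤ t := by exact_mod_cast ht
  unfold lrate
  rw [div_le_div_iff₀ (by positivity) (by positivity)]
  nlinarith

theorem stmt_2 (H : ℕ) (hH : 1 ≤ H) (t : ℕ) (ht : 1 ≤ t) :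
    ∑ i ∈ Finset.Icc 1 t, (lrateW H t i) ^ 2 ≤ 2 * H / t :=
  calc ∑ i ∈ Icc 1 t, lrateW H t i ^ 2
      ≤ lrate H t * ∑ i ∈ Icc 1 t, lrateW H t i :=
        sum_sq_le_mul_sum _ (fun i _ => lrateW_nonneg H t i)
          fun i hi => lrateW_le_lrate H (mem_Icc.mp hi).2
    _ = lrate H t := by rw [sum_lrateW H ht, mul_one]
    _ ≤ 2 * H / t := lrate_le_two_mul_div H t hH ht
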